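/- For every ε with 0 < ε < 1/10, the translated set A = C_U + π(1/2, 1/2) in 𝕋² = ℝ²/ℤ², where C_U = π({(x,y) ∈ ℝ² : |x| ≤ ε or |y| ≤ ε}), satisfies m(A ∪ σ₁(A) ∪ σ₂(A) ∪ σ₁⁻¹(A) ∪ σ₂⁻¹(A)) < 2·m(A), where m is the Haar probability measure on 𝕋². -/

import Mathlib

open MeasureTheory

/-- The torus `𝕋² = ℝ²/ℤ²`, modeled as a product of two unit circles. -/
abbrev Torus : Type := AddCircle (1 : ℝ) × AddCircle (1 : ℝ)

/-- The natural projection `π : ℝ² → 𝕋²`. -/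
noncomputable def torusProj (p : ℝ × ℝ) : Torus :=
  ((p.1 : AddCircle (1 : ℝ)), (p.2 : AddCircle (1 : ℝ)))

/-- Action of `σ₁ = [[1,1],[0,1]]` on the torus, induced by its linear action on `ℝ²`. -/
noncomputable def sigma1 (p : Torus) : Torus := (p.1 + p.2, p.2)

/-- Action of `σ₂ = [[1,0],[1,1]]` on the torus. -/
noncomputable def sigma2 (p : Torus) : Torus := (p.1, p.1 + p.2)

/-- Action of `σ₁⁻¹ = [[1,-1],[0,1]]` on the torus. -/
noncomputable def sigma1inv (p : Torus) : Torus := (p.1 - p.2, p.2)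

/-- Action of `σ₂⁻¹ = [[1,0],[-1,1]]` on the torus. -/
noncomputable def sigma2inv (p : Torus) : Torus := (p.1, p.2 - p.1)

/-- The set `C_U = π({(x,y) : |x| ≤ ε or |y| ≤ ε})`. -/
noncomputable def CU (ε : ℝ) : Set Torus :=
  torusProj '' {p : ℝ × ℝ | |p.1| ≤ ε ∨ |p.2| ≤ ε}

/-- The set `C_D = C_U ∪ π({(x,y) : |x+y| ≤ ε})`. -/
noncomputable def CD (ε : ℝ) : Set Torus :=
  CU ε ∪ torusProj '' {p : ℝ × ℝ | |p.1 + p.2| ≤ ε}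

/-!
Let `B` be the closed `ε`-ball about `π(1/2)` in the circle, so that `A` is the cross
`{x ∈ B} ∪ {y ∈ B}`. Because `-B = B`, each of the four images of `A` lies in
`A ∪ {x + y ∈ B} ∪ {y - x ∈ B}`. The shears `(x, y) ↦ (x, x + y)` and
`(x, y) ↦ (x, y - x)` preserve Haar measure, so with `b = m(B)` each of the sets
`{x ∉ B, y ∈ B}`, `{x ∉ B, x + y ∈ B}` and `{x ∉ B, y - x ∈ B}` has measure `(1 - b) b`. Hence
`m(A) = b + (1 - b) b`, while the union has measure at most `b + 3 (1 - b) b`, which is less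
than `2 m(A)` as soon as `b > 0`.
-/

open Set Metric

def cross {α : Type*} (B : Set α) : Set (α × α) := Prod.fst ⁻¹' B ∪ Prod.snd ⁻¹' B

lemma image_add_cross {G : Type*} [AddGroup G] (B : Set G) (g : G) :
    (· + (g, g)) '' cross B = cross ((· + g) '' B) := by
  simp only [image_add_right]
  rfl

lemma prod_cross {α : Type*} [MeasurableSpace α] {μ : Measure α} [IsProbabilityMeasure μ]
    {B : Set α} (hB : MeasurableSet B) :
    μ.prod μ (cross B) = μ B + μ Bᶜ * μ B := by
  have hsplit : cross B = B ×ˢ univ ∪ Bᶜ ×ˢ B := by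
    ext; simp [cross]; tauto
  rw [hsplit, measure_union (disjoint_compl_right.mono (prod_subset_preimage_fst _ _)
    (prod_subset_preimage_fst _ _)) (hB.compl.prod hB), Measure.prod_prod, Measure.prod_prod,
    measure_univ, mul_one]

section Shear

variable {G : Type*} [MeasurableSpace G] [AddGroup G] [MeasurableAdd₂ G]
  (μ : Measure G) [SFinite μ] [μ.IsAddLeftInvariant]

lemma prod_fst_preimage_inter_add_preimage {C B : Set G} (hC : MeasurableSet C)
    (hB : MeasurableSet B) :
    μ.prod μ (Prod.fst ⁻¹' C ∩ (fun p : G × G => p.1 + p.2) ⁻¹' B) = μ C * μ B :=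
  ((measurePreserving_prod_add μ μ).measure_preimage (hC.prod hB).nullMeasurableSet).trans
    (Measure.prod_prod C B)

lemma prod_fst_preimage_inter_neg_add_preimage [MeasurableNeg G] {C B : Set G}
    (hC : MeasurableSet C) (hB : MeasurableSet B) :
    μ.prod μ (Prod.fst ⁻¹' C ∩ (fun p : G × G => -p.1 + p.2) ⁻¹' B) = μ C * μ B :=
  ((measurePreserving_prod_neg_add μ μ).measure_preimage (hC.prod hB).nullMeasurableSet).trans
    (Measure.prod_prod C B)

end Shear

section Strips

variable {G : Type*} [MeasurableSpace G] [AddGroup G] [MeasurableAdd₂ G] [MeasurableNeg G]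
  {μ : Measure G} [IsProbabilityMeasure μ] [μ.IsAddLeftInvariant] {B : Set G}

lemma prod_cross_union_strips_le (hB : MeasurableSet B) :
    μ.prod μ (cross B ∪ (fun p : G × G => p.1 + p.2) ⁻¹' B
      ∪ (fun p : G × G => -p.1 + p.2) ⁻¹' B)
      ≤ μ B + μ Bᶜ * μ B + μ Bᶜ * μ B + μ Bᶜ * μ B := by
  have hsplit : cross B ∪ (fun p : G × G => p.1 + p.2) ⁻¹' B
      ∪ (fun p : G × G => -p.1 + p.2) ⁻¹' B
      = cross B ∪ Prod.fst ⁻¹' Bᶜ ∩ (fun p : G × G => p.1 + p.2) ⁻¹' B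
        ∪ Prod.fst ⁻¹' Bᶜ ∩ (fun p : G × G => -p.1 + p.2) ⁻¹' B := by
    ext; simp [cross]; tauto
  calc _ ≤ μ.prod μ (cross B)
        + μ.prod μ (Prod.fst ⁻¹' Bᶜ ∩ (fun p : G × G => p.1 + p.2) ⁻¹' B)
        + μ.prod μ (Prod.fst ⁻¹' Bᶜ ∩ (fun p : G × G => -p.1 + p.2) ⁻¹' B) :=
        hsplit ▸ (measure_union_le _ _).trans (add_le_add (measure_union_le _ _) le_rfl)
    _ = _ := by
        rw [prod_cross hB, prod_fst_preimage_inter_add_preimage μ hB.compl hB,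
          prod_fst_preimage_inter_neg_add_preimage μ hB.compl hB]

theorem prod_cross_union_strips_lt (hB : MeasurableSet B) (hB₀ : μ B ≠ 0) :
    μ.prod μ (cross B ∪ (fun p : G × G => p.1 + p.2) ⁻¹' B
      ∪ (fun p : G × G => -p.1 + p.2) ⁻¹' B)
      < 2 * μ.prod μ (cross B) := by
  have hcompl : μ Bᶜ < 1 := by
    rw [prob_compl_eq_one_sub hB]
    exact ENNReal.sub_lt_self ENNReal.one_ne_top one_ne_zero hB₀
  have hc : μ Bᶜ * μ B < μ B := by
    simpa [mul_comm] using ENNReal.mul_lt_mul_right hB₀ (measure_ne_top μ B) hcompl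
  calc _ ≤ μ B + μ Bᶜ * μ B + (μ Bᶜ * μ B + μ Bᶜ * μ B) := by
        rw [← add_assoc]; exact prod_cross_union_strips_le hB
    _ < μ B + μ Bᶜ * μ B + (μ B + μ Bᶜ * μ B) :=
        ENNReal.add_lt_add_left (by finiteness) (ENNReal.add_lt_add_right (by finiteness) hc)
    _ = 2 * μ.prod μ (cross B) := by rw [prod_cross hB, two_mul]

end Strips

lemma AddCircle.coe_image_closedBall (p x ε : ℝ) :
    ((↑) : ℝ → AddCircle p) '' closedBall x ε = closedBall (x : AddCircle p) ε := by
  ext q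
  constructor
  · rintro ⟨y, hy, rfl⟩
    rw [mem_closedBall, dist_eq_norm, ← AddCircle.coe_sub]
    exact QuotientAddGroup.norm_mk_le_norm.trans hy
  · obtain ⟨y, rfl⟩ := QuotientAddGroup.mk_surjective q
    intro hy
    refine ⟨y - round (p⁻¹ * (y - x)) * p, ?_, ?_⟩
    · rw [mem_closedBall, Real.dist_eq, sub_right_comm, ← AddCircle.norm_eq, AddCircle.coe_sub,
        ← dist_eq_norm]
      exact hy
    · simp [AddCircle.coe_period]

lemma AddCircle.neg_coe_half_period (p : ℝ) :
    -((p / 2 : ℝ) : AddCircle p) = ((p / 2 : ℝ) : AddCircle p) := by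
  rw [← AddCircle.coe_neg, show -(p / 2) = p / 2 - p by ring, AddCircle.coe_sub,
    AddCircle.coe_period, sub_zero]

instance : IsProbabilityMeasure (volume : Measure (AddCircle (1 : ℝ))) :=
  ⟨UnitAddCircle.measure_univ⟩

lemma CU_eq_cross (ε : ℝ) : CU ε = cross (closedBall 0 ε) := by
  have hstrips : {p : ℝ × ℝ | |p.1| ≤ ε ∨ |p.2| ≤ ε}
      = closedBall 0 ε ×ˢ univ ∪ univ ×ˢ closedBall 0 ε := by
    ext; simp [Real.norm_eq_abs]
  have hproj : torusProj = Prod.map (↑) (↑) := rfl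
  have hsurj : ((↑) : ℝ → AddCircle (1 : ℝ)) '' univ = univ :=
    image_univ_of_surjective QuotientAddGroup.mk_surjective
  rw [CU, hproj, hstrips, image_union, prodMap_image_prod, prodMap_image_prod, hsurj,
    AddCircle.coe_image_closedBall, AddCircle.coe_zero, prod_univ, univ_prod, cross]

lemma translate_CU_eq_cross (ε : ℝ) :
    (fun u => u + torusProj (1 / 2, 1 / 2)) '' CU ε
      = cross (closedBall ((1 / 2 : ℝ) : AddCircle (1 : ℝ)) ε) := by
  have hcentre : torusProj (1 / 2, 1 / 2)
      = (((1 / 2 : ℝ) : AddCircle (1 : ℝ)), ((1 / 2 : ℝ) : AddCircle (1 : ℝ))) := rfl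
  rw [CU_eq_cross, hcentre, image_add_cross, image_add_right, preimage_add_right_closedBall,
    zero_sub, neg_neg]

lemma union_sigma_image_cross_subset {B : Set (AddCircle (1 : ℝ))} (hB : -B = B) :
    cross B ∪ sigma1 '' cross B ∪ sigma2 '' cross B ∪ sigma1inv '' cross B
        ∪ sigma2inv '' cross B
      ⊆ cross B ∪ (fun p : Torus => p.1 + p.2) ⁻¹' B ∪ (fun p : Torus => -p.1 + p.2) ⁻¹' B := by
  have hneg : ∀ x ∈ B, -x ∈ B := fun x hx => hB ▸ neg_mem_neg.2 hx
  rintro _ ((((hp | ⟨⟨x, y⟩, hp, rfl⟩) | ⟨⟨x, y⟩, hp, rfl⟩) | ⟨⟨x, y⟩, hp, rfl⟩) |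
    ⟨⟨x, y⟩, hp, rfl⟩)
  · exact Or.inl (Or.inl hp)
  all_goals
    simp only [cross, sigma1, sigma2, sigma1inv, sigma2inv, mem_union, mem_preimage] at hp ⊢
    rcases hp with hp | hp
  · exact Or.inr (by simpa using hneg x hp)
  · exact Or.inl (Or.inl (Or.inr hp))
  · exact Or.inl (Or.inl (Or.inl hp))
  · exact Or.inr (by simpa using hp)
  · exact Or.inl (Or.inr (by simpa using hp))
  · exact Or.inl (Or.inl (Or.inr hp))
  · exact Or.inl (Or.inl (Or.inl hp))
  · exact Or.inl (Or.inr (by simpa using hp))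

theorem CU_translate_bad_expansion_general (ε : ℝ) (hε : 0 < ε) :
    ∀ A : Set Torus, A = (fun u => u + torusProj (1 / 2, 1 / 2)) '' CU ε →
      volume (A ∪ sigma1 '' A ∪ sigma2 '' A ∪ sigma1inv '' A ∪ sigma2inv '' A)
        < 2 * volume A := by
  rintro A rfl
  set B := closedBall ((1 / 2 : ℝ) : AddCircle (1 : ℝ)) ε
  have hB_symm : -B = B := by rw [neg_closedBall, AddCircle.neg_coe_half_period]
  have hB₀ : volume B ≠ 0 := by
    rw [AddCircle.volume_closedBall]
    exact (ENNReal.ofReal_pos.2 (lt_min one_pos (by linarith))).ne'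
  rw [translate_CU_eq_cross, Measure.volume_eq_prod]
  exact (measure_mono (union_sigma_image_cross_subset hB_symm)).trans_lt
    (prod_cross_union_strips_lt measurableSet_closedBall hB₀)

/-- The translate `C_U + π(1/2, 1/2)` also expands badly under `σ₁, σ₂, σ₁⁻¹, σ₂⁻¹`. -/
theorem CU_translate_bad_expansion (ε : ℝ) (hε : 0 < ε) (hε' : ε < 1 / 10) :
    ∀ A : Set Torus, A = (fun u => u + torusProj (1 / 2, 1 / 2)) '' CU ε →
      volume (A ∪ sigma1 '' A ∪ sigma2 '' A ∪ sigma1inv '' A ∪ sigma2inv '' A)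
        < 2 * volume A :=
  CU_translate_bad_expansion_general ε hε
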